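/- Let f be continuous and differentiable at 0 with f(x) = a₁·cos(ω₁ x + b₁) for x ≤ 0 and f(x) = a₂·cos(ω₂ x + b₂) for x ≥ 0, with a₁, a₂ > 0, ω₁ = q√p₁/Z, ω₂ = q√p₂/Z, q, Z > 0, and 0 < p₁ ≤ p₂. Then 1 ≤ a₁/a₂ ≤ √(p₂/p₁). -/
import Mathlib


open Real

/-- Bounds on the amplitude ratio between two neighboring constant-density
regions, from the continuity and differentiability matching conditions. -/
theorem amplitude_ratio_bounds
    (a₁ a₂ b₁ b₂ p₁ p₂ q Z : ℝ)
    (ha₁ : 0 < a₁) (ha₂ : 0 < a₂)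
    (hq : 0 < q) (hZ : 0 < Z)
    (hp₁ : 0 < p₁) (hp₁₂ : p₁ ≤ p₂)
    (hcont : a₁ * Real.cos b₁ = a₂ * Real.cos b₂)
    (hdiff : a₁ * Real.sqrt p₁ * Real.sin b₁ = a₂ * Real.sqrt p₂ * Real.sin b₂)
    (hsin : Real.sin b₁ ≠ 0) (hcos : Real.cos b₁ ≠ 0) :
    1 ≤ a₁ / a₂ ∧ a₁ / a₂ ≤ Real.sqrt (p₂ / p₁) := by
  have hp₂ : 0 < p₂ := lt_of_lt_of_le hp₁ hp₁₂
  have hs₁ : Real.sqrt p₁ ^ 2 = p₁ := Real.sq_sqrt hp₁.le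
  have hs₂ : Real.sqrt p₂ ^ 2 = p₂ := Real.sq_sqrt hp₂.le
  have h1 : a₁ ^ 2 * p₁ * Real.sin b₁ ^ 2 = a₂ ^ 2 * p₂ * Real.sin b₂ ^ 2 := by
    linear_combination (a₁ * Real.sqrt p₁ * Real.sin b₁ +
        a₂ * Real.sqrt p₂ * Real.sin b₂) * hdiff
      - a₁ ^ 2 * Real.sin b₁ ^ 2 * hs₁ + a₂ ^ 2 * Real.sin b₂ ^ 2 * hs₂
  have h2 : a₁ ^ 2 * Real.cos b₁ ^ 2 = a₂ ^ 2 * Real.cos b₂ ^ 2 := by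
    linear_combination (a₁ * Real.cos b₁ + a₂ * Real.cos b₂) * hcont
  have hpy₁ := Real.sin_sq_add_cos_sq b₁
  have hpy₂ := Real.sin_sq_add_cos_sq b₂
  have e1 : p₁ * (a₁ ^ 2 - a₂ ^ 2) = (p₂ - p₁) * (a₂ ^ 2 * Real.sin b₂ ^ 2) := by
    linear_combination (-(p₁ * a₁ ^ 2)) * hpy₁ + (p₁ * a₂ ^ 2) * hpy₂ + h1 + p₁ * h2
  have e2 : a₂ ^ 2 * p₂ - a₁ ^ 2 * p₁ = (p₂ - p₁) * (a₂ ^ 2 * Real.cos b₂ ^ 2) := by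
    linear_combination (p₁ * a₁ ^ 2) * hpy₁ - (p₂ * a₂ ^ 2) * hpy₂ - h1 - p₁ * h2
  have hsnn : 0 ≤ (p₂ - p₁) * (a₂ ^ 2 * Real.sin b₂ ^ 2) :=
    mul_nonneg (by linarith) (by positivity)
  have hcnn : 0 ≤ (p₂ - p₁) * (a₂ ^ 2 * Real.cos b₂ ^ 2) :=
    mul_nonneg (by linarith) (by positivity)
  have hlow : a₂ ^ 2 ≤ a₁ ^ 2 := by nlinarith [e1, hsnn, hp₁]
  have hup : a₁ ^ 2 * p₁ ≤ a₂ ^ 2 * p₂ := by linarith [e2, hcnn]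
  constructor
  · rw [le_div_iff₀ ha₂]
    have h := Real.sqrt_le_sqrt hlow
    rw [Real.sqrt_sq ha₂.le, Real.sqrt_sq ha₁.le] at h; linarith
  · have hratio : (a₁ / a₂) ^ 2 ≤ p₂ / p₁ := by
      rw [div_pow, div_le_div_iff₀ (by positivity) hp₁]
      nlinarith
    calc a₁ / a₂ = Real.sqrt ((a₁ / a₂) ^ 2) := by
          rw [Real.sqrt_sq (by positivity)]
      _ ≤ Real.sqrt (p₂ / p₁) := Real.sqrt_le_sqrt hratio
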